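/- arXiv:1709.05785 — 2 statements merged into one kernel-verified Lean document; each statement's English description precedes it below -/
import Mathlib

section
/- Let $a_{\inf}, a_{\sup}, b_{\inf}, b_{\sup}, \chi, \mu$ be positive reals with $a_{\inf} \le a_{\sup}$, $b_{\inf} \le b_{\sup}$, and $b_{\inf} > (1 + a_{\sup}/a_{\inf})\chi\mu$. Define sequences $(\underline{M}_n)$, $(\overline{M}_n)$ by $\underline{M}_0 = 0$, $\overline{M}_n = (a_{\sup} - \chi\mu \underline{M}_n)/(b_{\inf} - \chi\mu)$, and $\underline{M}_{n+1} = (a_{\inf} - \chi\mu \overline{M}_n)/(b_{\sup} - \chi\mu)$. Then for every $n \ge 0$: $\underline{M}_{n+1} > \underline{M}_n \ge 0$ and $\overline{M}_n > \overline{M}_{n+1} > 0$. -/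
theorem stmt_0 (ainf asup binf bsup χ μ : ℝ)
    (hainf : 0 < ainf) (hasup : 0 < asup) (hbinf : 0 < binf) (hbsup : 0 < bsup)
    (hχ : 0 < χ) (hμ : 0 < μ)
    (ha : ainf ≤ asup) (hb : binf ≤ bsup)
    (hH2 : binf > (1 + asup / ainf) * χ * μ)
    (Mlo Mhi : ℕ → ℝ)
    (hMlo0 : Mlo 0 = 0)
    (hMhi : ∀ n, Mhi n = (asup - χ * μ * Mlo n) / (binf - χ * μ))
    (hMlo : ∀ n, Mlo (n + 1) = (ainf - χ * μ * Mhi n) / (bsup - χ * μ)) :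
    ∀ n, Mlo (n + 1) > Mlo n ∧ Mlo n ≥ 0 ∧ Mhi n > Mhi (n + 1) ∧ Mhi (n + 1) > 0 := by
  set c := χ * μ with hcdef
  have hc : 0 < c := mul_pos hχ hμ
  have key : c * asup < ainf * (binf - c) := by
    have h := mul_lt_mul_of_pos_right hH2 hainf
    have h2 : (1 + asup / ainf) * χ * μ * ainf = (ainf + asup) * c := by
      field_simp; ring
    rw [h2] at h
    nlinarith
  have hbc : 0 < binf - c := by nlinarith [mul_pos hc hasup]
  have hbsc : 0 < bsup - c := by linarith
  have h2b : c < binf - c := by nlinarith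
  have h2s : c < bsup - c := by linarith
  have hMhi' : ∀ n, Mhi n * (binf - c) = asup - c * Mlo n := fun n => by
    rw [hMhi, div_mul_cancel₀ _ hbc.ne']
  have hMlo' : ∀ n, Mlo (n + 1) * (bsup - c) = ainf - c * Mhi n := fun n => by
    rw [hMlo, div_mul_cancel₀ _ hbsc.ne']
  have main : ∀ n, 0 ≤ Mlo n ∧ c * Mlo n < ainf ∧ Mlo n < Mlo (n + 1) := by
    intro n
    induction n with
    | zero =>
      refine ⟨le_of_eq hMlo0.symm, by rw [hMlo0]; simpa using hainf, ?_⟩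
      have h1 := hMhi' 0
      have h2 := hMlo' 0
      rw [hMlo0] at h1 ⊢
      -- Mhi 0 * (binf - c) = asup, c * asup < ainf * (binf - c)
      have hMhi0 : c * Mhi 0 < ainf := by nlinarith
      nlinarith
    | succ n ih =>
      obtain ⟨h0, hlt, hmono⟩ := ih
      have hpos1 : 0 ≤ Mlo (n + 1) := le_trans h0 hmono.le
      have hMhin : 0 < Mhi n := by nlinarith [hMhi' n]
      have hlt1 : c * Mlo (n + 1) < ainf := by nlinarith [hMlo' n]
      have hMhimono : Mhi (n + 1) < Mhi n := by
        nlinarith [hMhi' n, hMhi' (n + 1)]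
      have hmono1 : Mlo (n + 1) < Mlo (n + 2) := by
        nlinarith [hMlo' n, hMlo' (n + 1)]
      exact ⟨hpos1, hlt1, hmono1⟩
  intro n
  obtain ⟨h0, hlt, hmono⟩ := main n
  obtain ⟨h0', hlt', _⟩ := main (n + 1)
  refine ⟨hmono, h0, ?_, ?_⟩
  · have hd : (Mhi n - Mhi (n + 1)) * (binf - c) = c * (Mlo (n + 1) - Mlo n) := by
      linear_combination hMhi' n - hMhi' (n + 1)
    nlinarith [mul_pos hc (sub_pos.mpr hmono)]
  · rw [hMhi (n + 1)]
    exact div_pos (by linarith) hbc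
end

section
/- Let $a_{\inf}, a_{\sup}, b_{\inf}, b_{\sup}, \chi, \mu$ be positive reals with $a_{\inf} \le a_{\sup}$, $b_{\inf} \le b_{\sup}$, and $b_{\inf} > (1 + a_{\sup}/a_{\inf})\chi\mu$. Define sequences $(\underline{M}_n)$, $(\overline{M}_n)$ by $\underline{M}_0 = 0$, $\overline{M}_n = (a_{\sup} - \chi\mu \underline{M}_n)/(b_{\inf} - \chi\mu)$, $\underline{M}_{n+1} = (a_{\inf} - \chi\mu \overline{M}_n)/(b_{\sup} - \chi\mu)$. Then $\underline{M}_n \to \underline{M}$ and $\overline{M}_n \to \overline{M}$ as $n \to \infty$, where $\underline{M} = \frac{(b_{\inf}-\chi\mu)a_{\inf} - \chi\mu a_{\sup}}{(b_{\sup}-\chi\mu)(b_{\inf}-\chi\mu) - (\chi\mu)^2}$ and $\overline{M} = \frac{(b_{\sup}-\chi\mu)a_{\sup} - \chi\mu a_{\inf}}{(b_{\sup}-\chi\mu)(b_{\inf}-\chi\mu) - (\chi\mu)^2}$. -/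
/-!
Eliminating `Mhi` turns the coupled recursion into the affine recursion
`Mlo (n+1) = c + r * Mlo n` with `r = (χμ)² / ((bsup - χμ)(binf - χμ))`. The hypothesis gives
`χμ < binf - χμ ≤ bsup - χμ`, hence `0 ≤ r < 1`, so `Mlo` converges geometrically to the fixed
point of this affine map, and `Mhi`, an affine function of `Mlo`, converges with it.
-/

open Filter Topology

theorem tendsto_of_sub_eq_mul_sub {R : Type*} [SeminormedRing R] {u : ℕ → R} {L r : R}
    (hr : ‖r‖ < 1) (h : ∀ n, u (n + 1) - L = r * (u n - L)) : Tendsto u atTop (𝓝 L) := by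
  have hgeom : ∀ n, u n = L + r ^ n * (u 0 - L) := by
    intro n
    induction n with
    | zero => simp
    | succ n ih => rw [pow_succ', mul_assoc, eq_sub_of_add_eq' ih.symm, ← h, add_sub_cancel]
  have hlim := tendsto_const_nhds (x := L).add
    ((tendsto_pow_atTop_nhds_zero_of_norm_lt_one hr).mul_const (u 0 - L))
  rw [zero_mul, add_zero] at hlim
  exact hlim.congr fun n ↦ (hgeom n).symm

theorem lt_sub_of_one_add_div_mul_lt {a a' b k : ℝ} (ha : 0 < a) (haa' : a ≤ a') (hk : 0 < k)
    (hb : (1 + a' / a) * k < b) : k < b - k := by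
  have : 1 ≤ a' / a := (one_le_div ha).2 haa'
  nlinarith

noncomputable section AffineRecursion

variable (ainf asup binf bsup k : ℝ)

def lowerLimit : ℝ := ((binf - k) * ainf - k * asup) / ((bsup - k) * (binf - k) - k ^ 2)

def upperLimit : ℝ := ((bsup - k) * asup - k * ainf) / ((bsup - k) * (binf - k) - k ^ 2)

variable {ainf asup binf bsup k}

theorem lowerStep_sub_lowerLimit (hbinf : binf - k ≠ 0) (hbsup : bsup - k ≠ 0)
    (hD : (bsup - k) * (binf - k) - k ^ 2 ≠ 0) (x : ℝ) :
    (ainf - k * ((asup - k * x) / (binf - k))) / (bsup - k) - lowerLimit ainf asup binf bsup k =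
      k ^ 2 / ((bsup - k) * (binf - k)) * (x - lowerLimit ainf asup binf bsup k) := by
  unfold lowerLimit
  -- an opaque `D` keeps `field_simp` from expanding the denominator into an unusable form
  set D := (bsup - k) * (binf - k) - k ^ 2 with hDdef
  field_simp
  rw [hDdef]
  ring

theorem upperStep_lowerLimit (hbinf : binf - k ≠ 0) (hD : (bsup - k) * (binf - k) - k ^ 2 ≠ 0) :
    (asup - k * lowerLimit ainf asup binf bsup k) / (binf - k) =
      upperLimit ainf asup binf bsup k := by
  unfold lowerLimit upperLimit
  set D := (bsup - k) * (binf - k) - k ^ 2 with hDdef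
  field_simp
  rw [hDdef]
  ring

end AffineRecursion

theorem stmt_1_general (ainf asup binf bsup χ μ : ℝ)
    (hainf : 0 < ainf)
    (hχ : 0 < χ) (hμ : 0 < μ)
    (ha : ainf ≤ asup) (hb : binf ≤ bsup)
    (hH2 : binf > (1 + asup / ainf) * χ * μ)
    (Mlo Mhi : ℕ → ℝ)
    (hMhi : ∀ n, Mhi n = (asup - χ * μ * Mlo n) / (binf - χ * μ))
    (hMlo : ∀ n, Mlo (n + 1) = (ainf - χ * μ * Mhi n) / (bsup - χ * μ)) :
    Filter.Tendsto Mlo Filter.atTop (nhds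
      (((binf - χ * μ) * ainf - χ * μ * asup) /
        ((bsup - χ * μ) * (binf - χ * μ) - (χ * μ) ^ 2))) ∧
    Filter.Tendsto Mhi Filter.atTop (nhds
      (((bsup - χ * μ) * asup - χ * μ * ainf) /
        ((bsup - χ * μ) * (binf - χ * μ) - (χ * μ) ^ 2))) := by
  set k := χ * μ
  have hk : 0 < k := mul_pos hχ hμ
  have hkbinf : k < binf - k :=
    lt_sub_of_one_add_div_mul_lt hainf ha hk (by rwa [mul_assoc] at hH2)
  have hP : 0 < (bsup - k) * (binf - k) := by nlinarith
  have hkP : k ^ 2 < (bsup - k) * (binf - k) := by nlinarith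
  have hr : ‖k ^ 2 / ((bsup - k) * (binf - k))‖ < 1 := by
    rw [Real.norm_eq_abs, abs_of_nonneg (by positivity), div_lt_one hP]
    exact hkP
  have hlo : Tendsto Mlo atTop (𝓝 (lowerLimit ainf asup binf bsup k)) :=
    tendsto_of_sub_eq_mul_sub hr fun n ↦ by
      rw [hMlo, hMhi]
      exact lowerStep_sub_lowerLimit (by linarith) (by linarith) (by linarith) _
  have hhi : Tendsto Mhi atTop (𝓝 (upperLimit ainf asup binf bsup k)) := by
    rw [← upperStep_lowerLimit (by linarith) (by linarith)]
    exact ((tendsto_const_nhds.sub (hlo.const_mul k)).div_const _).congr fun n ↦ (hMhi n).symm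
  exact ⟨hlo, hhi⟩

theorem stmt_1 (ainf asup binf bsup χ μ : ℝ)
    (hainf : 0 < ainf) (hasup : 0 < asup) (hbinf : 0 < binf) (hbsup : 0 < bsup)
    (hχ : 0 < χ) (hμ : 0 < μ)
    (ha : ainf ≤ asup) (hb : binf ≤ bsup)
    (hH2 : binf > (1 + asup / ainf) * χ * μ)
    (Mlo Mhi : ℕ → ℝ)
    (hMlo0 : Mlo 0 = 0)
    (hMhi : ∀ n, Mhi n = (asup - χ * μ * Mlo n) / (binf - χ * μ))
    (hMlo : ∀ n, Mlo (n + 1) = (ainf - χ * μ * Mhi n) / (bsup - χ * μ)) :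
    Filter.Tendsto Mlo Filter.atTop (nhds
      (((binf - χ * μ) * ainf - χ * μ * asup) /
        ((bsup - χ * μ) * (binf - χ * μ) - (χ * μ) ^ 2))) ∧
    Filter.Tendsto Mhi Filter.atTop (nhds
      (((bsup - χ * μ) * asup - χ * μ * ainf) /
        ((bsup - χ * μ) * (binf - χ * μ) - (χ * μ) ^ 2))) :=
  stmt_1_general ainf asup binf bsup χ μ hainf hχ hμ ha hb hH2 Mlo Mhi hMhi hMlo
end
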